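/- arXiv:2107.04783 — 2 statements merged into one kernel-verified Lean document; each statement's English description precedes it below -/
import Mathlib

section
/- Let Γ and Δ = {1,…,d} be finite sets, K ≤ Sym(Γ), L ≤ Sym(Δ), m ≥ 2 an integer, and k = min{k_m, d}, where k_m is the number of orbits of K in its componentwise action on Γ^m. Then K^(m) ↑ L^[k] ≤ (K↑L)^(m). -/
open Equiv MulAction Pointwise

/-- The `m`-closure of a permutation group `G ≤ Sym(Ω)`: the largest subgroup of `Sym(Ω)`
having the same orbits as `G` in the induced componentwise action on `Ω^m`. -/
def mClosure {Ω : Type*} (m : ℕ) (G : Subgroup (Equiv.Perm Ω)) : Subgroup (Equiv.Perm Ω) :=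
  sSup {H : Subgroup (Equiv.Perm Ω) |
    ∀ α : Fin m → Ω, MulAction.orbit H α = MulAction.orbit G α}

/-- An ordered partition of `Ω` into at most `m` nonempty classes. -/
structure OrderedPartition (Ω : Type*) (m : ℕ) where
  classes : List (Set Ω)
  length_le : classes.length ≤ m
  nonempty : ∀ s ∈ classes, s.Nonempty
  pairwise_disjoint : classes.Pairwise Disjoint
  covers : ∀ x : Ω, ∃ s ∈ classes, x ∈ s

namespace OrderedPartition

variable {Ω : Type*} {m : ℕ}

theorem ext' {P Q : OrderedPartition Ω m} (h : P.classes = Q.classes) : P = Q := by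
  cases P; cases Q; simpa using h

/-- The natural action of a permutation on an ordered partition, classwise. -/
def act (f : Equiv.Perm Ω) (P : OrderedPartition Ω m) : OrderedPartition Ω m where
  classes := P.classes.map fun s => f '' s
  length_le := by simpa using P.length_le
  nonempty := by
    intro s hs
    obtain ⟨t, ht, rfl⟩ := List.mem_map.mp hs
    exact (P.nonempty t ht).image _
  pairwise_disjoint :=
    P.pairwise_disjoint.map _ fun s t h => (Set.disjoint_image_iff f.injective).mpr h
  covers := by
    intro x
    obtain ⟨s, hs, hx⟩ := P.covers (f⁻¹ x)
    exact ⟨f '' s, List.mem_map.mpr ⟨s, hs, rfl⟩, f⁻¹ x, hx, by simp⟩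

instance : SMul (Equiv.Perm Ω) (OrderedPartition Ω m) := ⟨act⟩

theorem smul_classes (f : Equiv.Perm Ω) (P : OrderedPartition Ω m) :
    (f • P).classes = P.classes.map fun s => f '' s := rfl

instance : MulAction (Equiv.Perm Ω) (OrderedPartition Ω m) where
  one_smul P := ext' (by simp [smul_classes])
  mul_smul f g P := ext' (by
    simp [smul_classes, List.map_map, Function.comp_def, Set.image_image])

end OrderedPartition

/-- The partition `m`-closure `G^[m]` of a permutation group `G ≤ Sym(Ω)`: the largest
subgroup of `Sym(Ω)` having the same orbits as `G` in its induced action on the set of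
ordered partitions of `Ω` into at most `m` nonempty classes. -/
def partClosure {Ω : Type*} (m : ℕ) (G : Subgroup (Equiv.Perm Ω)) : Subgroup (Equiv.Perm Ω) :=
  sSup {H : Subgroup (Equiv.Perm Ω) |
    ∀ P : OrderedPartition Ω m, MulAction.orbit H P = MulAction.orbit G P}

/-- The element `(g_1, …, g_d; ḡ)` of the wreath product in product action:
`(ω^g)_i = (ω_{i^{ḡ⁻¹}})^{g_{i^{ḡ⁻¹}}}`. -/
def wreathElem {Γ Δ : Type*} (gs : Δ → Equiv.Perm Γ) (σ : Equiv.Perm Δ) :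
    Equiv.Perm (Δ → Γ) where
  toFun ω i := gs (σ⁻¹ i) (ω (σ⁻¹ i))
  invFun ω i := (gs i)⁻¹ (ω (σ i))
  left_inv ω := by funext i; simp
  right_inv ω := by funext i; simp

theorem wreathElem_apply {Γ Δ : Type*} (gs : Δ → Equiv.Perm Γ) (σ : Equiv.Perm Δ)
    (ω : Δ → Γ) (i : Δ) : wreathElem gs σ ω i = gs (σ⁻¹ i) (ω (σ⁻¹ i)) := rfl

theorem wreathElem_one {Γ Δ : Type*} :
    wreathElem (fun _ : Δ => (1 : Equiv.Perm Γ)) 1 = 1 := by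
  refine Equiv.ext fun ω => funext fun i => ?_
  simp [wreathElem_apply]

theorem wreathElem_mul {Γ Δ : Type*} (gs hs : Δ → Equiv.Perm Γ) (σ τ : Equiv.Perm Δ) :
    wreathElem gs σ * wreathElem hs τ = wreathElem (fun j => gs (τ j) * hs j) (σ * τ) := by
  refine Equiv.ext fun ω => funext fun i => ?_
  simp [wreathElem_apply, Equiv.Perm.mul_apply, mul_inv_rev]

theorem wreathElem_inv {Γ Δ : Type*} (gs : Δ → Equiv.Perm Γ) (σ : Equiv.Perm Δ) :
    (wreathElem gs σ)⁻¹ = wreathElem (fun j => (gs (σ⁻¹ j))⁻¹) σ⁻¹ := by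
  rw [inv_eq_iff_mul_eq_one, wreathElem_mul]
  simpa using wreathElem_one

/-- The wreath product `K ↑ L` of `K ≤ Sym(Γ)` and `L ≤ Sym(Δ)` in product action,
as a subgroup of `Sym(Γ^Δ)`. -/
def wreathProduct {Γ Δ : Type*} (K : Subgroup (Equiv.Perm Γ)) (L : Subgroup (Equiv.Perm Δ)) :
    Subgroup (Equiv.Perm (Δ → Γ)) where
  carrier := {h | ∃ (gs : Δ → Equiv.Perm Γ) (σ : Equiv.Perm Δ),
    (∀ i, gs i ∈ K) ∧ σ ∈ L ∧ h = wreathElem gs σ}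
  one_mem' := ⟨fun _ => 1, 1, fun _ => K.one_mem, L.one_mem, wreathElem_one.symm⟩
  mul_mem' := by
    rintro f h ⟨gs, σ, hgs, hσ, rfl⟩ ⟨hs, τ, hhs, hτ, rfl⟩
    exact ⟨fun j => gs (τ j) * hs j, σ * τ, fun j => K.mul_mem (hgs _) (hhs _),
      L.mul_mem hσ hτ, wreathElem_mul gs hs σ τ⟩
  inv_mem' := by
    rintro f ⟨gs, σ, hgs, hσ, rfl⟩
    exact ⟨fun j => (gs (σ⁻¹ j))⁻¹, σ⁻¹, fun j => K.inv_mem (hgs _), L.inv_mem hσ,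
      wreathElem_inv gs σ⟩

/-- `k_m`: the number of orbits of `K ≤ Sym(Γ)` in its componentwise action on `Γ^m`. -/
noncomputable def numOrbits {Γ : Type*} (m : ℕ) (K : Subgroup (Equiv.Perm Γ)) : ℕ :=
  Nat.card (MulAction.orbitRel.Quotient K (Fin m → Γ))

/-- A permutation group `L ≤ Sym(Δ)` is primitive if it is transitive and preserves
no nontrivial partition of `Δ` (partitions being identified with equivalence relations). -/
def IsPrimitiveSubgroup {Δ : Type*} (L : Subgroup (Equiv.Perm Δ)) : Prop :=
  (∀ x y : Δ, ∃ g ∈ L, g x = y) ∧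
  ∀ r : Setoid Δ, (∀ g ∈ L, ∀ x y : Δ, r.r x y → r.r (g x) (g y)) → r = ⊥ ∨ r = ⊤

/-- The direct product `K × L ≤ Sym(Γ × Δ)` acting coordinatewise on `Γ × Δ`. -/
def prodSubgroup {Γ Δ : Type*} (K : Subgroup (Equiv.Perm Γ)) (L : Subgroup (Equiv.Perm Δ)) :
    Subgroup (Equiv.Perm (Γ × Δ)) where
  carrier := {h | ∃ k ∈ K, ∃ l ∈ L, h = Equiv.prodCongr k l}
  one_mem' := ⟨1, K.one_mem, 1, L.one_mem, Equiv.ext fun x => rfl⟩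
  mul_mem' := by
    rintro f h ⟨k₁, hk₁, l₁, hl₁, rfl⟩ ⟨k₂, hk₂, l₂, hl₂, rfl⟩
    exact ⟨k₁ * k₂, K.mul_mem hk₁ hk₂, l₁ * l₂, L.mul_mem hl₁ hl₂, Equiv.ext fun x => rfl⟩
  inv_mem' := by
    rintro f ⟨k, hk, l, hl, rfl⟩
    exact ⟨k⁻¹, K.inv_mem hk, l⁻¹, L.inv_mem hl, Equiv.ext fun x => rfl⟩

/-- Given an enumeration (via `sIdx`) of the orbits of `K` on `Γ^m` by `Fin a`,
and `α ∈ Ω^m` with `Ω = Γ^d` viewed as a `d × m` matrix with rows `α[i] = (j ↦ α j i)`,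
`piClasses sIdx α` is the ordered partition `Π(α)` of `Δ = Fin d` whose `ℓ`-th class
consists of the `i` whose row `α[i]` lies in the orbit with the `ℓ`-th smallest
occurring index. -/
def piClasses {Γ : Type*} {d m a : ℕ} (sIdx : (Fin m → Γ) → Fin a)
    (α : Fin m → (Fin d → Γ)) : List (Set (Fin d)) :=
  ((Finset.univ.image fun i : Fin d => sIdx fun j => α j i).sort (· ≤ ·)).map
    fun t => {i : Fin d | sIdx (fun j => α j i) = t}

/-! Let `f = (g_1, …, g_d; σ)` with `g_i ∈ K^(m)`, `σ ∈ L^[k]`, and view `α ∈ (Γ^d)^m` as a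
`d × m` matrix. Labelling each `i ∈ Δ` by the `K`-orbit of the row `α[i] ∈ Γ^m` uses at most `k`
labels, so `σ` moves the partition of `Δ` into label classes like some `τ ∈ L`; thus `σ⁻¹τ`
preserves labels. Then `g_{σ⁻¹τ(i)} ∈ K^(m)` maps `α[σ⁻¹τ(i)]` into the `K`-orbit of `α[i]`,
which yields `c_i ∈ K` with `α^(c_1, …, c_d; τ) = α^f`. -/

def orbitClosure {Ω : Type*} (X : Type*) [MulAction (Equiv.Perm Ω) X]
    (G : Subgroup (Equiv.Perm Ω)) : Subgroup (Equiv.Perm Ω) where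
  carrier := {f | ∀ x : X, f • x ∈ orbit G x}
  one_mem' x := by simpa using mem_orbit_self x
  mul_mem' {f g} hf hg x := by
    obtain ⟨u, hu⟩ := hg x
    rw [mul_smul, ← hu, ← orbit_smul u x]
    exact hf (u • x)
  inv_mem' {f} hf x := by
    obtain ⟨u, hu⟩ := hf (f⁻¹ • x)
    rw [smul_inv_smul] at hu
    exact ⟨u⁻¹, (eq_inv_smul_iff.mpr hu).symm⟩

theorem le_orbitClosure {Ω : Type*} (X : Type*) [MulAction (Equiv.Perm Ω) X]
    (G : Subgroup (Equiv.Perm Ω)) : G ≤ orbitClosure X G :=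
  fun g hg _ => ⟨⟨g, hg⟩, rfl⟩

theorem sSup_orbit_eq_eq_orbitClosure {Ω : Type*} (X : Type*) [MulAction (Equiv.Perm Ω) X]
    (G : Subgroup (Equiv.Perm Ω)) :
    sSup {H : Subgroup (Equiv.Perm Ω) | ∀ x : X, orbit H x = orbit G x} = orbitClosure X G := by
  refine le_antisymm (sSup_le fun H hH f hf x => hH x ▸ ⟨⟨f, hf⟩, rfl⟩) (le_sSup fun x => ?_)
  refine Set.Subset.antisymm ?_ ?_
  · rintro _ ⟨⟨f, hf⟩, rfl⟩
    exact hf x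
  · rintro _ ⟨⟨g, hg⟩, rfl⟩
    exact ⟨⟨g, le_orbitClosure X G hg⟩, rfl⟩

theorem mem_mClosure_iff {Ω : Type*} {m : ℕ} {G : Subgroup (Equiv.Perm Ω)}
    {f : Equiv.Perm Ω} : f ∈ mClosure m G ↔ ∀ α : Fin m → Ω, f • α ∈ orbit G α := by
  rw [mClosure, sSup_orbit_eq_eq_orbitClosure]
  rfl

theorem mem_partClosure_iff {Ω : Type*} {k : ℕ} {G : Subgroup (Equiv.Perm Ω)}
    {f : Equiv.Perm Ω} :
    f ∈ partClosure k G ↔ ∀ P : OrderedPartition Ω k, f • P ∈ orbit G P := by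
  rw [partClosure, sSup_orbit_eq_eq_orbitClosure]
  rfl

namespace OrderedPartition

variable {Δ β : Type*} {k : ℕ}

def ofLabelling [Fintype Δ] [LinearOrder β] (ℓ : Δ → β)
    (hk : (Finset.univ.image ℓ).card ≤ k) : OrderedPartition Δ k where
  classes := ((Finset.univ.image ℓ).sort (· ≤ ·)).map fun b => ℓ ⁻¹' {b}
  length_le := by rwa [List.length_map, Finset.length_sort]
  nonempty := by
    simp only [List.mem_map, Finset.mem_sort, Finset.mem_image]
    rintro _ ⟨_, ⟨i, -, rfl⟩, rfl⟩
    exact ⟨i, rfl⟩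
  pairwise_disjoint := List.Pairwise.map _
    (fun _ _ hbc => Set.disjoint_left.mpr fun _ hb hc => hbc (hb.symm.trans hc))
    (Finset.sort_nodup _ _)
  covers i := ⟨ℓ ⁻¹' {ℓ i}, List.mem_map.mpr
    ⟨ℓ i, (Finset.mem_sort _).mpr (Finset.mem_image_of_mem ℓ (Finset.mem_univ i)), rfl⟩, rfl⟩

theorem image_eq_of_smul_eq {P : OrderedPartition Δ k} {f g : Equiv.Perm Δ}
    (h : f • P = g • P) : ∀ s ∈ P.classes, f '' s = g '' s := by
  simpa only [smul_classes, List.map_inj_left] using congrArg classes h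

theorem labelling_eq_of_smul_ofLabelling_eq [Fintype Δ] [LinearOrder β] {ℓ : Δ → β}
    {hk : (Finset.univ.image ℓ).card ≤ k} {f g : Equiv.Perm Δ}
    (h : f • ofLabelling ℓ hk = g • ofLabelling ℓ hk) (i : Δ) : ℓ (g⁻¹ (f i)) = ℓ i := by
  have hclass : ℓ ⁻¹' {ℓ i} ∈ (ofLabelling ℓ hk).classes := List.mem_map.mpr
    ⟨ℓ i, (Finset.mem_sort _).mpr (Finset.mem_image_of_mem ℓ (Finset.mem_univ i)), rfl⟩
  obtain ⟨j, hj, hji⟩ : f i ∈ g '' (ℓ ⁻¹' {ℓ i}) :=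
    image_eq_of_smul_eq h _ hclass ▸ Set.mem_image_of_mem f rfl
  rwa [← hji, Perm.inv_def, symm_apply_apply]

end OrderedPartition

theorem exists_mem_labelling_eq_of_mem_partClosure {Δ β : Type*} [Fintype Δ] [LinearOrder β]
    {k : ℕ} {L : Subgroup (Equiv.Perm Δ)} {σ : Equiv.Perm Δ} (hσ : σ ∈ partClosure k L)
    (ℓ : Δ → β) (hk : (Finset.univ.image ℓ).card ≤ k) :
    ∃ τ ∈ L, ∀ i, ℓ (σ⁻¹ (τ i)) = ℓ i := by
  obtain ⟨⟨τ, hτ⟩, hτσ⟩ := mem_partClosure_iff.mp hσ (OrderedPartition.ofLabelling ℓ hk)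
  exact ⟨τ, hτ, OrderedPartition.labelling_eq_of_smul_ofLabelling_eq hτσ⟩

theorem exists_orbit_labelling {G X : Type*} [Group G] [MulAction G X] [Finite X] :
    ∃ ℓ : X → Fin (Nat.card (orbitRel.Quotient G X)), ∀ x y, ℓ x = ℓ y ↔ x ∈ orbit G y := by
  refine ⟨fun x => Finite.equivFin _ (Quotient.mk'' x), fun x y => ?_⟩
  rw [(Finite.equivFin _).apply_eq_iff_eq, Quotient.eq'']
  exact orbitRel_apply

theorem wreathElem_smul_eq_of_rows {ι Γ Δ : Type*} {gs cs : Δ → Equiv.Perm Γ}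
    {σ τ : Equiv.Perm Δ} {α : ι → Δ → Γ}
    (h : ∀ i, cs i • (fun j => α j i) = gs (σ⁻¹ (τ i)) • fun j => α j (σ⁻¹ (τ i))) :
    wreathElem cs τ • α = wreathElem gs σ • α := by
  funext j i
  simpa [wreathElem_apply] using congrFun (h (τ⁻¹ i)) j

theorem wreathElem_smul_mem_orbit {Γ : Type*} [Fintype Γ] {d m : ℕ}
    {K : Subgroup (Equiv.Perm Γ)} {L : Subgroup (Equiv.Perm (Fin d))}
    {gs : Fin d → Equiv.Perm Γ} {σ : Equiv.Perm (Fin d)}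
    (hgs : ∀ i, gs i ∈ mClosure m K) (hσ : σ ∈ partClosure (min (numOrbits m K) d) L)
    (α : Fin m → Fin d → Γ) :
    wreathElem gs σ • α ∈ orbit (wreathProduct K L) α := by
  obtain ⟨ℓ, hℓ⟩ := exists_orbit_labelling (G := K) (X := Fin m → Γ)
  let row : Fin d → Fin m → Γ := fun i j => α j i
  have hcard : (Finset.univ.image fun i => ℓ (row i)).card ≤ min (numOrbits m K) d :=
    le_min ((Finset.card_le_univ _).trans_eq (Fintype.card_fin _))
      (Finset.card_image_le.trans_eq (Finset.card_fin d))
  obtain ⟨τ, hτ, hτσ⟩ := exists_mem_labelling_eq_of_mem_partClosure hσ _ hcard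
  have hrow : ∀ i, ∃ c ∈ K, c • row i = gs (σ⁻¹ (τ i)) • row (σ⁻¹ (τ i)) := by
    intro i
    have hK := mem_mClosure_iff.mp (hgs (σ⁻¹ (τ i))) (row (σ⁻¹ (τ i)))
    rw [orbit_eq_iff.mpr ((hℓ _ _).mp (hτσ i))] at hK
    obtain ⟨⟨c, hc⟩, hc'⟩ := hK
    exact ⟨c, hc, hc'⟩
  choose cs hcs hcsα using hrow
  exact ⟨⟨wreathElem cs τ, cs, τ, hcs, hτ, rfl⟩, wreathElem_smul_eq_of_rows hcsα⟩

theorem wreathProduct_le_mClosure_general {Γ : Type*} [Fintype Γ] {d : ℕ}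
    (K : Subgroup (Equiv.Perm Γ)) (L : Subgroup (Equiv.Perm (Fin d)))
    (m : ℕ) :
    wreathProduct (mClosure m K) (partClosure (min (numOrbits m K) d) L) ≤
      mClosure m (wreathProduct K L) := by
  rintro _ ⟨gs, σ, hgs, hσ, rfl⟩
  exact mem_mClosure_iff.mpr (wreathElem_smul_mem_orbit hgs hσ)

/-- `K^(m) ↑ L^[k] ≤ (K↑L)^(m)`, where `k = min{k_m, d}`. -/
theorem wreathProduct_le_mClosure {Γ : Type*} [Fintype Γ] {d : ℕ}
    (K : Subgroup (Equiv.Perm Γ)) (L : Subgroup (Equiv.Perm (Fin d)))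
    (m : ℕ) (hm : 2 ≤ m) :
    wreathProduct (mClosure m K) (partClosure (min (numOrbits m K) d) L) ≤
      mClosure m (wreathProduct K L) :=
  wreathProduct_le_mClosure_general K L m
end

section
/- Let Γ and Δ = {1,…,d} be finite sets. Then the 2-closure of the wreath product of symmetric groups in product action is itself: (Sym(Γ) ↑ Sym(Δ))^(2) = Sym(Γ) ↑ Sym(Δ). -/
open Equiv MulAction Pointwise

/-! Every element of `Sym(Γ) ↑ Sym(Δ)` preserves the Hamming distance on `Γ^Δ`, and hence so
does every element of its 2-closure; it remains to see that every isometry `f` of the Hamming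
space lies in the wreath product. An isometry maps each line `{update z i a | a}` through a base
point `z` into a line through `f z`, with distinct directions for distinct `i`; this yields `σ`
and `gs` such that `wreathElem gs σ` agrees with `f` on all lines through `z`. Two isometries
agreeing there coincide, because a point `x` is determined by its distances to these lines: on
the `i`-th line, the point with coordinate `x i` is the unique one closest to `x`. -/

open Function

theorem mClosure_eq_self_of_smul_mem_orbit {Ω : Type*} {m : ℕ} {G : Subgroup (Perm Ω)}
    (h : ∀ f : Perm Ω, (∀ α : Fin m → Ω, f • α ∈ orbit G α) → f ∈ G) :
    mClosure m G = G :=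
  le_antisymm (sSup_le fun H hH f hf => h f fun α => hH α ▸ mem_orbit α (⟨f, hf⟩ : H))
    (le_sSup fun _ => rfl)

section Hamming

variable {ι κ α β : Type*} [Fintype ι] [Fintype κ] [DecidableEq α] [DecidableEq β]

theorem one_lt_hammingDist {x y : ι → α} {i j : ι} (hij : i ≠ j) (hi : x i ≠ y i)
    (hj : x j ≠ y j) : 1 < hammingDist x y :=
  Finset.one_lt_card.mpr ⟨i, by simpa using hi, j, by simpa using hj, hij⟩

theorem hammingDist_comp_equiv (x y : ι → α) (σ : Perm ι) :
    hammingDist (x ∘ σ) (y ∘ σ) = hammingDist x y :=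
  Finset.card_equiv σ (by simp)

theorem hammingDist_wreathElem (gs : ι → Perm α) (σ : Perm ι) (x y : ι → α) :
    hammingDist (wreathElem gs σ x) (wreathElem gs σ y) = hammingDist x y := by
  rw [← hammingDist_comp_equiv x y σ⁻¹]
  exact hammingDist_comp (fun i => gs (σ⁻¹ i)) fun i => (gs (σ⁻¹ i)).injective

theorem hammingDist_apply_of_mem_wreathProduct {K : Subgroup (Perm α)} {L : Subgroup (Perm ι)}
    {g : Perm (ι → α)} (hg : g ∈ wreathProduct K L) (x y : ι → α) :
    hammingDist (g x) (g y) = hammingDist x y := by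
  obtain ⟨gs, σ, -, -, rfl⟩ := hg
  exact hammingDist_wreathElem gs σ x y

variable [DecidableEq ι]

theorem hammingDist_update_le_one (x : ι → α) (i : ι) (a : α) :
    hammingDist (update x i a) x ≤ 1 := by
  refine Finset.card_le_one.mpr fun j hj k hk => ?_
  simp only [Finset.mem_filter, Finset.mem_univ, true_and] at hj hk
  by_contra hjk
  rcases eq_or_ne j i with rfl | hji
  · exact hk (update_of_ne (Ne.symm hjk) _ _)
  · exact hj (update_of_ne hji _ _)

theorem hammingDist_update_update_le_one (x : ι → α) (i : ι) (a b : α) :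
    hammingDist (update x i a) (update x i b) ≤ 1 := by
  simpa using hammingDist_update_le_one (update x i b) i a

theorem eq_update_of_hammingDist_le_one {x y : ι → α} {i : ι} (h : hammingDist x y ≤ 1)
    (hi : x i ≠ y i) : x = update y i (x i) := by
  funext j
  rcases eq_or_ne j i with rfl | hji
  · simp
  · rw [update_of_ne hji]
    by_contra hj
    exact (one_lt_hammingDist hji hj hi).not_ge h

theorem exists_eq_update_of_hammingDist_le_one {x y : ι → α} (i₀ : ι)
    (h : hammingDist x y ≤ 1) : ∃ i a, x = update y i a := by
  by_cases hxy : x = y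
  · exact ⟨i₀, y i₀, by simp [hxy]⟩
  · obtain ⟨i, hi⟩ := Function.ne_iff.mp hxy
    exact ⟨i, x i, eq_update_of_hammingDist_le_one h hi⟩

theorem hammingDist_update_of_ne {x z : ι → α} {i : ι} {a : α} (ha : a ≠ x i) :
    hammingDist x (update z i a) = hammingDist x (update z i (x i)) + 1 := by
  have : Finset.univ.filter (fun j => x j ≠ update z i a j) =
      insert i (Finset.univ.filter fun j => x j ≠ update z i (x i) j) := by
    ext j
    rcases eq_or_ne j i with rfl | hji
    · simp [Ne.symm ha]
    · simp [hji]
  rw [hammingDist, this, Finset.card_insert_of_notMem (by simp)]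
  rfl

theorem eq_of_forall_hammingDist_update_eq {x y : ι → α} (z : ι → α)
    (h : ∀ i a, hammingDist x (update z i a) = hammingDist y (update z i a)) : x = y := by
  funext i
  by_contra hxy
  have hx := hammingDist_update_of_ne (z := z) (Ne.symm hxy)
  have hy := hammingDist_update_of_ne (z := z) hxy
  rw [h] at hx
  rw [← h] at hy
  omega

theorem eq_of_forall_apply_update_eq {f g : Perm (ι → α)}
    (hf : ∀ x y, hammingDist (f x) (f y) = hammingDist x y)
    (hg : ∀ x y, hammingDist (g x) (g y) = hammingDist x y) (z : ι → α)
    (h : ∀ i a, f (update z i a) = g (update z i a)) : f = g := by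
  ext1 x
  refine eq_of_forall_hammingDist_update_eq (f z) fun i a => ?_
  obtain ⟨i', a', hu⟩ := exists_eq_update_of_hammingDist_le_one (x := f.symm (update (f z) i a))
    (y := z) i (by rw [← hf, f.apply_symm_apply]; exact hammingDist_update_le_one _ _ _)
  calc hammingDist (f x) (update (f z) i a)
      = hammingDist (f x) (f (update z i' a')) := by rw [← hu, f.apply_symm_apply]
    _ = hammingDist (g x) (g (update z i' a')) := by rw [hf, hg]
    _ = hammingDist (g x) (update (f z) i a) := by rw [← h, ← hu, f.apply_symm_apply]

variable [DecidableEq κ]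

theorem exists_apply_update_eq_update [Nontrivial α] {f : (ι → α) → (κ → β)}
    (hf : ∀ x y, hammingDist (f x) (f y) = hammingDist x y) (z : ι → α) (i : ι) :
    ∃ j, ∀ a, f (update z i a) = update (f z) j (f (update z i a) j) := by
  obtain ⟨a₀, ha₀⟩ := exists_ne (z i)
  have hdist : ∀ a, hammingDist (f (update z i a)) (f z) ≤ 1 := fun a =>
    (hf _ _).trans_le (hammingDist_update_le_one z i a)
  have hne : f (update z i a₀) ≠ f z := by
    rw [← hammingDist_ne_zero, hf, hammingDist_ne_zero, Ne, update_eq_self_iff]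
    exact ha₀
  obtain ⟨j, hj⟩ := Function.ne_iff.mp hne
  refine ⟨j, fun a => ?_⟩
  by_cases ha : f (update z i a) j = f z j
  · suffices f (update z i a) = f z by simp [this]
    by_contra hne'
    obtain ⟨k, hk⟩ := Function.ne_iff.mp hne'
    have hkj : k ≠ j := by rintro rfl; exact hk ha
    have hk₀ : f (update z i a₀) k = f z k := by
      rw [eq_update_of_hammingDist_le_one (hdist a₀) hj, update_of_ne hkj]
    have hfar := one_lt_hammingDist hkj (hk₀ ▸ hk) (by rw [ha]; exact Ne.symm hj)
    rw [hf] at hfar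
    exact hfar.not_ge (hammingDist_update_update_le_one z i a a₀)
  · exact eq_update_of_hammingDist_le_one (hdist a) ha

end Hamming

section Isometry

variable {ι α : Type*} [Fintype ι] [DecidableEq ι] [DecidableEq α]

theorem exists_wreathElem_apply_update_eq [Finite α] [Nontrivial α] {f : Perm (ι → α)}
    (hf : ∀ x y, hammingDist (f x) (f y) = hammingDist x y) (z : ι → α) :
    ∃ (gs : ι → Perm α) (σ : Perm ι),
      ∀ i a, wreathElem gs σ (update z i a) = f (update z i a) := by
  choose σ₀ hσ₀ using exists_apply_update_eq_update hf z
  have hσ₀_inj : Injective σ₀ := by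
    intro i i' h
    by_contra hne
    obtain ⟨a, ha⟩ := exists_ne (z i)
    obtain ⟨a', ha'⟩ := exists_ne (z i')
    have hfar := one_lt_hammingDist hne (x := update z i a) (y := update z i' a')
      (by simp [hne, ha]) (by simp [Ne.symm hne, Ne.symm ha'])
    rw [← hf, hσ₀ i a, hσ₀ i' a', h] at hfar
    exact hfar.not_ge (hammingDist_update_update_le_one _ _ _ _)
  let k : ι → α → α := fun i a => f (update z i a) (σ₀ i)
  have hk_inj : ∀ i, Injective (k i) := by
    intro i a a' h
    apply update_injective z i
    apply f.injective
    rw [hσ₀ i a, hσ₀ i a']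
    exact congrArg (update (f z) (σ₀ i)) h
  let σ : Perm ι := Equiv.ofBijective σ₀ hσ₀_inj.bijective_of_finite
  refine ⟨fun i => Equiv.ofBijective (k i) (hk_inj i).bijective_of_finite, σ, fun i a => ?_⟩
  funext j
  obtain ⟨i', rfl⟩ := σ.surjective j
  rw [wreathElem_apply, hσ₀ i a]
  rcases eq_or_ne i' i with rfl | hi'
  · simp [k, σ]
  · simp [k, σ, hi', hσ₀_inj.ne hi']

theorem mem_wreathProduct_top_of_isometry [Finite α] {f : Perm (ι → α)}
    (hf : ∀ x y, hammingDist (f x) (f y) = hammingDist x y) :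
    f ∈ wreathProduct (⊤ : Subgroup (Perm α)) (⊤ : Subgroup (Perm ι)) := by
  rcases subsingleton_or_nontrivial α with hα | hα
  · rw [Subsingleton.elim f 1]
    exact one_mem _
  obtain ⟨z⟩ : Nonempty (ι → α) := inferInstance
  obtain ⟨gs, σ, h⟩ := exists_wreathElem_apply_update_eq hf z
  obtain rfl := eq_of_forall_apply_update_eq (hammingDist_wreathElem gs σ) hf z h
  exact ⟨gs, σ, fun _ => Subgroup.mem_top _, Subgroup.mem_top _, rfl⟩

end Isometry

/-- `(Sym(Γ) ↑ Sym(Δ))^(2) = Sym(Γ) ↑ Sym(Δ)`. -/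
theorem mClosure_two_wreath_top {Γ : Type*} [Fintype Γ] {d : ℕ} :
    mClosure 2 (wreathProduct (⊤ : Subgroup (Equiv.Perm Γ))
        (⊤ : Subgroup (Equiv.Perm (Fin d)))) =
      wreathProduct (⊤ : Subgroup (Equiv.Perm Γ)) (⊤ : Subgroup (Equiv.Perm (Fin d))) := by
  classical
  refine mClosure_eq_self_of_smul_mem_orbit fun f hf =>
    mem_wreathProduct_top_of_isometry fun x y => ?_
  obtain ⟨⟨g, hg⟩, hgf⟩ := hf ![x, y]
  have hx : g x = f x := congrFun hgf 0
  have hy : g y = f y := congrFun hgf 1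
  rw [← hx, ← hy, hammingDist_apply_of_mem_wreathProduct hg]
end
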